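/- arXiv:1503.00891 — 3 statements merged into one kernel-verified Lean document; each statement's English description precedes it below -/
import Mathlib

section
/- Let μ be a homogeneous homothetic self-similar measure in ℝ² (i.e., μ = Σ_{i=1}^q p_i (f_i)_*μ where f_i(x) = λx + t_i, all maps share the same contraction ratio λ ∈ (0,1), and the p_i are strictly positive) satisfying the strong separation condition and whose support is not contained in any line. Then there exists a constant c > 0 such that for every orthogonal projection π from ℝ² onto a one-dimensional subspace, the Hausdorff dimension of the projected measure π_*μ is at least c. -/
open MeasureTheory Metric Filter Set
open scoped ENNReal NNReal Topology RealInnerProductSpace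

/-- Hausdorff dimension of a measure: `inf {dimH A : μ A > 0}`. -/
noncomputable def dimHMeasure {X : Type*} [MetricSpace X] [MeasurableSpace X]
    (μ : Measure X) : ℝ≥0∞ :=
  ⨅ (A : Set X) (_ : 0 < μ A), dimH A

/-- Topological support of a measure. -/
def msupport {X : Type*} [TopologicalSpace X] [MeasurableSpace X] (μ : Measure X) : Set X :=
  {x | ∀ U ∈ nhds x, 0 < μ U}

/-!
Fix a unit vector `v`. The projection `ν = π_v μ` is again self-similar, on `ℝ`, with ratio `λ`
and translations `⟪v, t i⟫`. As `Λ` lies on no line, compactness of the unit circle gives `η > 0`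
such that in every direction two of these translations are at least `η` apart. Choose `n` with
`λ ^ (n + 1) * 2 (1 + diam Λ) < η` and expand `ν` over words `i w` of length `n + 1`: the
cylinders of `i w` and `j w` are then too far apart for a ball of radius `λ ^ (n + 1)` to meet
both, so at each scale a ball loses at least the weight `min p`, and
`ν (B (y, λ ^ ((n + 1) k))) ≤ (1 - min p) ^ k`. This decay, uniform in `v`, is a Frostman
condition with some exponent `d > 0`, so by the mass distribution principle `dim ν ≥ d`.
-/

universe u

theorem exists_pos_le_ofReal_rpow {ρ : ℝ} (hρ : 0 < ρ) {θ : ℝ≥0∞} (hθ : θ < 1) :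
    ∃ d : ℝ≥0, 0 < d ∧ θ ≤ ENNReal.ofReal (ρ ^ (d : ℝ)) := by
  have hcont : ContinuousAt (fun d : ℝ => ENNReal.ofReal (ρ ^ d)) 0 :=
    ENNReal.continuous_ofReal.continuousAt.comp (Real.continuousAt_const_rpow hρ.ne')
  have h : ∀ᶠ d : ℝ in 𝓝[>] 0, θ < ENNReal.ofReal (ρ ^ d) :=
    nhdsWithin_le_nhds (hcont.eventually (lt_mem_nhds (by simpa using hθ)))
  obtain ⟨d, hθd, hd⟩ := (h.and self_mem_nhdsWithin).exists
  exact ⟨⟨d, le_of_lt hd⟩, hd, hθd.le⟩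

section MassDistribution

variable {X : Type*} [MetricSpace X] [MeasurableSpace X] [BorelSpace X] {ν : Measure X}

theorem le_dimHMeasure_of_absolutelyContinuous {d : ℝ≥0} (h : ν ≪ μH[d]) :
    (d : ℝ≥0∞) ≤ dimHMeasure ν :=
  le_iInf₂ fun _ hA => le_of_not_gt fun hlt => hA.ne' (h (hausdorffMeasure_of_dimH_lt hlt))

theorem absolutelyContinuous_hausdorffMeasure_of_le_mul_ediam_rpow {d : ℝ} {C r : ℝ≥0∞}
    (hC : C ≠ ∞) (hr : 0 < r) (h : ∀ s, ediam s ≤ r → ν s ≤ C * ediam s ^ d) : ν ≪ μH[d] := by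
  -- `mkMetric_mono_smul` needs a nonzero constant, hence `max C 1` rather than `C`.
  set C' := max C 1
  have hC'0 : C' ≠ 0 := (zero_lt_one.trans_le (le_max_right C 1)).ne'
  have hC'top : C' ≠ ∞ := max_ne_top hC ENNReal.one_ne_top
  refine Measure.absolutelyContinuous_of_le_smul (c := C') ?_
  refine (Measure.le_mkMetric (fun e => C' * e ^ d) ν r hr fun s hs => ?_).trans
    (Measure.mkMetric_mono_smul hC'top hC'0 (Eventually.of_forall fun _ => le_rfl))
  exact (h s hs).trans (mul_le_mul_left (le_max_left C 1) _)

theorem absolutelyContinuous_hausdorffMeasure_of_measure_closedBall_le_pow {ρ r₀ : ℝ}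
    {θ : ℝ≥0∞} {d : ℝ≥0} (hρ0 : 0 < ρ) (hρ1 : ρ < 1) (hr₀ : 0 < r₀) (hθ : θ < 1)
    (hθd : θ ≤ ENNReal.ofReal (ρ ^ (d : ℝ)))
    (h : ∀ (k : ℕ) x, ν (closedBall x (r₀ * ρ ^ k)) ≤ θ ^ k) : ν ≪ μH[d] := by
  refine absolutelyContinuous_hausdorffMeasure_of_le_mul_ediam_rpow
    (C := ENNReal.ofReal ((r₀ * ρ)⁻¹ ^ (d : ℝ))) ENNReal.ofReal_ne_top
    (ENNReal.ofReal_pos.2 hr₀) fun s hs => ?_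
  rcases s.eq_empty_or_nonempty with rfl | ⟨x, hx⟩
  · simp
  have hne : ediam s ≠ ∞ := (hs.trans_lt ENNReal.ofReal_lt_top).ne
  have hbdd : Bornology.IsBounded s := isBounded_iff_ediam_ne_top.2 hne
  have hdiam : ENNReal.ofReal (diam s) = ediam s := ENNReal.ofReal_toReal hne
  have hball (k : ℕ) (hk : diam s ≤ r₀ * ρ ^ k) : ν s ≤ θ ^ k :=
    (measure_mono fun y hy => mem_closedBall.2 ((dist_le_diam_of_mem hbdd hy hx).trans hk)).trans
      (h k x)
  rcases (diam_nonneg (s := s)).eq_or_lt with h0 | hpos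
  · have : ν s = 0 := nonpos_iff_eq_zero.1 <|
      ge_of_tendsto' (ENNReal.tendsto_pow_atTop_nhds_zero_of_lt_one hθ) fun k =>
        hball k (h0 ▸ by positivity)
    simp [this]
  have hs' : diam s ≤ r₀ := by
    rwa [← ENNReal.ofReal_le_ofReal_iff hr₀.le, hdiam]
  obtain ⟨k, hk1, hk⟩ := exists_nat_pow_near_of_lt_one (div_pos hpos hr₀)
    ((div_le_one hr₀).2 hs') hρ0 hρ1
  calc ν s ≤ θ ^ k := hball k (by rwa [div_le_iff₀' hr₀] at hk)
    _ ≤ ENNReal.ofReal ((ρ ^ k) ^ (d : ℝ)) := by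
      rw [← Real.rpow_pow_comm hρ0.le, ENNReal.ofReal_pow (by positivity)]
      exact pow_le_pow_left₀ bot_le hθd k
    _ ≤ ENNReal.ofReal ((r₀ * ρ)⁻¹ ^ (d : ℝ) * diam s ^ (d : ℝ)) := by
      rw [← Real.mul_rpow (by positivity) diam_nonneg]
      gcongr
      rw [inv_mul_eq_div, le_div_iff₀ (by positivity)]
      calc ρ ^ k * (r₀ * ρ) = ρ ^ (k + 1) * r₀ := by ring
        _ ≤ diam s := ((lt_div_iff₀ hr₀).1 hk1).le
    _ = _ := by
      rw [ENNReal.ofReal_mul (by positivity), ← hdiam,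
        ENNReal.ofReal_rpow_of_nonneg diam_nonneg d.coe_nonneg]

end MassDistribution

theorem MeasureTheory.Measure.eq_sum_smul_map_comp {X : Type*} [MeasurableSpace X] {ι κ : Type*} [Fintype ι]
    [Fintype κ] {ν : Measure X} {p : ι → ℝ≥0∞} {c : κ → ℝ≥0∞} {g : ι → X → X} {h : κ → X → X}
    (hg : ∀ i, Measurable (g i)) (hh : ∀ w, Measurable (h w))
    (hνg : ν = ∑ i, p i • ν.map (g i)) (hνh : ν = ∑ w, c w • ν.map (h w)) :
    ν = ∑ iw : ι × κ, (p iw.1 * c iw.2) • ν.map (g iw.1 ∘ h iw.2) := by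
  calc ν = ∑ i, p i • (∑ w, c w • ν.map (h w)).map (g i) := by rw [← hνh]; exact hνg
    _ = _ := Measure.ext fun s hs => by
      simp only [Measure.finsetSum_apply, Measure.smul_apply, smul_eq_mul,
        Measure.map_apply (hg _) hs, Measure.map_apply (hh _) (hs.preimage (hg _)),
        Measure.map_apply ((hg _).comp (hh _)) hs, Fintype.sum_prod_type, Finset.mul_sum,
        preimage_comp, mul_assoc]

section Homothety

variable {E : Type*} [NormedAddCommGroup E] [NormedSpace ℝ E]

def scaleAdd (r : ℝ) (a : E) (x : E) : E := r • x + a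

@[simp]
theorem scaleAdd_apply (r : ℝ) (a x : E) : scaleAdd r a x = r • x + a := rfl

@[fun_prop]
theorem continuous_scaleAdd (r : ℝ) (a : E) : Continuous (scaleAdd r a) := by
  unfold scaleAdd; fun_prop

theorem scaleAdd_comp_scaleAdd (r s : ℝ) (a b : E) :
    scaleAdd r a ∘ scaleAdd s b = scaleAdd (r * s) (r • b + a) := by
  ext x; simp [smul_add, smul_smul, add_assoc]

theorem lipschitzWith_scaleAdd (r : ℝ) (a : E) : LipschitzWith ‖r‖₊ (scaleAdd r a) :=
  LipschitzWith.of_dist_le_mul fun x y => by simp [dist_eq_norm, ← smul_sub, norm_smul]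

theorem preimage_scaleAdd_closedBall {r : ℝ} (hr : 0 < r) (a c : E) (ε : ℝ) :
    scaleAdd r a ⁻¹' closedBall c (r * ε) = closedBall (r⁻¹ • (c - a)) ε := by
  ext x
  have : r • x + a - c = r • (x - r⁻¹ • (c - a)) := by
    rw [smul_sub, smul_inv_smul₀ hr.ne']; abel
  simp [dist_eq_norm, this, norm_smul, abs_of_pos hr, mul_le_mul_iff_right₀ hr]

theorem ContinuousLinearMap.comp_scaleAdd {F : Type*} [NormedAddCommGroup F] [NormedSpace ℝ F]
    (L : E →L[ℝ] F) (r : ℝ) (a : E) : L ∘ scaleAdd r a = scaleAdd r (L a) ∘ L := by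
  ext x; simp

end Homothety

section SelfSimilar

variable {E : Type*} [NormedAddCommGroup E] [NormedSpace ℝ E] [MeasurableSpace E] {ν : Measure E}

theorem exists_eq_sum_smul_map_scaleAdd_pow [BorelSpace E] {ι : Type u} [Fintype ι] {p : ι → ℝ≥0∞}
    (hp : ∑ i, p i = 1) {r : ℝ} {a : ι → E} (hν : ν = ∑ i, p i • ν.map (scaleAdd r (a i)))
    (n : ℕ) : ∃ (κ : Type u) (_ : Fintype κ) (c : κ → ℝ≥0∞) (τ : κ → E),
      ∑ w, c w = 1 ∧ ν = ∑ w, c w • ν.map (scaleAdd (r ^ n) (τ w)) := by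
  induction n with
  | zero =>
    refine ⟨PUnit, inferInstance, 1, 0, by simp, ?_⟩
    have : scaleAdd 1 (0 : E) = id := by ext x; simp
    simp [this]
  | succ n ih =>
    obtain ⟨κ, _, c, τ, hc, hνn⟩ := ih
    refine ⟨ι × κ, inferInstance, fun iw => p iw.1 * c iw.2, fun iw => r • τ iw.2 + a iw.1, ?_, ?_⟩
    · rw [Fintype.sum_prod_type, ← Finset.sum_mul_sum, hp, hc, one_mul]
    · simpa only [scaleAdd_comp_scaleAdd, ← pow_succ'] using
        Measure.eq_sum_smul_map_comp (fun _ => (continuous_scaleAdd _ _).measurable)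
          (fun _ => (continuous_scaleAdd _ _).measurable) hν hνn

theorem measure_closedBall_le_pow [BorelSpace E] [IsProbabilityMeasure ν] {κ : Type*} [Fintype κ]
    {c : κ → ℝ≥0∞} {ρ r₀ : ℝ} {τ : κ → E} {θ : ℝ≥0∞} (hρ0 : 0 < ρ) (hρ1 : ρ ≤ 1) (hr₀ : 0 ≤ r₀)
    (hν : ν = ∑ w, c w • ν.map (scaleAdd ρ (τ w)))
    (hθ : ∀ y, ∃ s : Finset κ, ∑ w ∈ s, c w ≤ θ ∧
      ∀ w ∉ s, ν (scaleAdd ρ (τ w) ⁻¹' closedBall y (ρ * r₀)) = 0)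
    (k : ℕ) (y : E) : ν (closedBall y (r₀ * ρ ^ k)) ≤ θ ^ k := by
  induction k generalizing y with
  | zero => simpa using prob_le_one
  | succ k ih =>
    obtain ⟨s, hsθ, hs⟩ := hθ y
    have hpre (w : κ) : scaleAdd ρ (τ w) ⁻¹' closedBall y (r₀ * ρ ^ (k + 1)) =
        closedBall (ρ⁻¹ • (y - τ w)) (r₀ * ρ ^ k) := by
      rw [← preimage_scaleAdd_closedBall hρ0]; ring_nf
    have hsub : closedBall y (r₀ * ρ ^ (k + 1)) ⊆ closedBall y (ρ * r₀) :=
      closedBall_subset_closedBall <| by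
        rw [pow_succ, mul_comm ρ r₀, ← mul_assoc]
        exact mul_le_mul_of_nonneg_right (mul_le_of_le_one_right hr₀ (pow_le_one₀ hρ0.le hρ1))
          hρ0.le
    calc ν (closedBall y (r₀ * ρ ^ (k + 1)))
        = ∑ w, c w * ν (scaleAdd ρ (τ w) ⁻¹' closedBall y (r₀ * ρ ^ (k + 1))) := by
          conv_lhs => rw [hν]
          simp only [Measure.finsetSum_apply, Measure.smul_apply, smul_eq_mul,
            Measure.map_apply (continuous_scaleAdd _ _).measurable measurableSet_closedBall]
      _ = ∑ w ∈ s, c w * ν (closedBall (ρ⁻¹ • (y - τ w)) (r₀ * ρ ^ k)) := by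
          rw [← Finset.sum_subset (Finset.subset_univ s) fun w _ hw => by
            rw [measure_mono_null (preimage_mono hsub) (hs w hw), mul_zero]]
          simp only [hpre]
      _ ≤ ∑ w ∈ s, c w * θ ^ k := by gcongr; exact ih _
      _ ≤ θ ^ (k + 1) := by rw [← Finset.sum_mul, pow_succ']; gcongr

theorem measure_preimage_scaleAdd_closedBall_eq_zero_or {y₀ : E} {R ρ r₀ : ℝ} (hρ : 0 ≤ ρ)
    (hK : ν (closedBall y₀ R)ᶜ = 0) {σ a b : E} (hab : ρ * (2 * (r₀ + R)) < ‖a - b‖) (y : E) :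
    ν (scaleAdd ρ (σ + a) ⁻¹' closedBall y (ρ * r₀)) = 0 ∨
      ν (scaleAdd ρ (σ + b) ⁻¹' closedBall y (ρ * r₀)) = 0 := by
  have hmem {e : E} (he : ν (scaleAdd ρ (σ + e) ⁻¹' closedBall y (ρ * r₀)) ≠ 0) :
      ∃ x, ‖x - y₀‖ ≤ R ∧ ‖ρ • x + (σ + e) - y‖ ≤ ρ * r₀ := by
    rw [← measure_inter_conull hK] at he
    obtain ⟨x, hxy, hx⟩ := nonempty_of_measure_ne_zero he
    exact ⟨x, mem_closedBall_iff_norm.1 hx, mem_closedBall_iff_norm.1 hxy⟩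
  by_contra! h
  obtain ⟨x₁, hx₁, hy₁⟩ := hmem h.1
  obtain ⟨x₂, hx₂, hy₂⟩ := hmem h.2
  have : a - b = (ρ • x₁ + (σ + a) - y) - (ρ • x₂ + (σ + b) - y) - ρ • (x₁ - y₀) +
      ρ • (x₂ - y₀) := by module
  refine hab.not_ge ?_
  calc ‖a - b‖ ≤ ‖ρ • x₁ + (σ + a) - y‖ + ‖ρ • x₂ + (σ + b) - y‖ + ρ * ‖x₁ - y₀‖ +
        ρ * ‖x₂ - y₀‖ := by
        rw [this, ← norm_smul_of_nonneg hρ, ← norm_smul_of_nonneg hρ]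
        exact (norm_add_le _ _).trans (add_le_add_left ((norm_sub_le _ _).trans
          (add_le_add_left (norm_sub_le _ _) _)) _)
    _ ≤ ρ * r₀ + ρ * r₀ + ρ * R + ρ * R := by gcongr
    _ = ρ * (2 * (r₀ + R)) := by ring

theorem sum_filter_ne_mul_le {ι κ : Type*} [Fintype ι] [DecidableEq ι] [Fintype κ]
    {p : ι → ℝ≥0∞} {c : κ → ℝ≥0∞} (hp : ∑ i, p i = 1) (hc : ∑ w, c w = 1) {pmin : ℝ≥0∞}
    (hpmin : ∀ i, pmin ≤ p i) (e : κ → ι) :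
    ∑ iw ∈ Finset.univ.filter (fun iw : ι × κ => iw.1 ≠ e iw.2), p iw.1 * c iw.2 ≤ 1 - pmin := by
  have hrest (i : ι) : ∑ j ∈ Finset.univ.erase i, p j ≤ 1 - pmin := by
    have hsum : ∑ j ∈ Finset.univ.erase i, p j + p i = 1 :=
      (Finset.sum_erase_add _ _ (Finset.mem_univ i)).trans hp
    calc _ = 1 - p i :=
          ENNReal.eq_sub_of_add_eq (ENNReal.add_ne_top.1 (hsum ▸ ENNReal.one_ne_top)).2 hsum
      _ ≤ 1 - pmin := tsub_le_tsub_left (hpmin i) 1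
  calc ∑ iw ∈ Finset.univ.filter (fun iw : ι × κ => iw.1 ≠ e iw.2), p iw.1 * c iw.2
      = ∑ w, (∑ i ∈ Finset.univ.erase (e w), p i) * c w := by
        rw [Finset.sum_filter, Fintype.sum_prod_type, Finset.sum_comm]
        refine Finset.sum_congr rfl fun w _ => ?_
        rw [← Finset.sum_filter]
        simp [Finset.sum_mul, Finset.filter_ne']
    _ ≤ ∑ w, (1 - pmin) * c w := by gcongr with w; exact hrest _
    _ = 1 - pmin := by rw [← Finset.mul_sum, hc, mul_one]

theorem measure_closedBall_le_pow_of_separated [BorelSpace E] [IsProbabilityMeasure ν]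
    {ι : Type u} [Fintype ι] {p : ι → ℝ≥0∞} (hp : ∑ i, p i = 1) {pmin : ℝ≥0∞}
    (hpmin : ∀ i, pmin ≤ p i) {r : ℝ} (hr0 : 0 < r) (hr1 : r ≤ 1) {a : ι → E}
    (hν : ν = ∑ i, p i • ν.map (scaleAdd r (a i))) {y₀ : E} {R : ℝ}
    (hK : ν (closedBall y₀ R)ᶜ = 0) {n : ℕ} {r₀ : ℝ} (hr₀ : 0 ≤ r₀) {i j : ι}
    (hij : r ^ (n + 1) * (2 * (r₀ + R)) < ‖a i - a j‖) (k : ℕ) (y : E) :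
    ν (closedBall y (r₀ * (r ^ (n + 1)) ^ k)) ≤ (1 - pmin) ^ k := by
  obtain ⟨κ, _, c, τ, hc, hνn⟩ := exists_eq_sum_smul_map_scaleAdd_pow hp hν n
  have hν' : ν = ∑ iw : ι × κ, (p iw.1 * c iw.2) •
      ν.map (scaleAdd (r ^ (n + 1)) (r • τ iw.2 + a iw.1)) := by
    simpa only [scaleAdd_comp_scaleAdd, ← pow_succ'] using
      Measure.eq_sum_smul_map_comp (fun _ => (continuous_scaleAdd _ _).measurable)
        (fun _ => (continuous_scaleAdd _ _).measurable) hν hνn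
  refine measure_closedBall_le_pow (pow_pos hr0 _) (pow_le_one₀ hr0.le hr1) hr₀ hν'
    (fun y => ?_) k y
  classical
  -- For every tail `w`, one of the sibling cylinders `(i, w)`, `(j, w)` misses the ball.
  let e (w : κ) : ι :=
    if ν (scaleAdd (r ^ (n + 1)) (r • τ w + a i) ⁻¹' closedBall y (r ^ (n + 1) * r₀)) = 0
    then i else j
  refine ⟨Finset.univ.filter (fun iw : ι × κ => iw.1 ≠ e iw.2),
    sum_filter_ne_mul_le hp hc hpmin e, fun ⟨b, w⟩ hbw => ?_⟩
  obtain rfl : b = e w := by simpa using hbw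
  unfold e
  split_ifs with h
  · exact h
  · exact (measure_preimage_scaleAdd_closedBall_eq_zero_or (pow_nonneg hr0.le _) hK hij
      y).resolve_left h

theorem map_eq_sum_smul_map_scaleAdd [BorelSpace E] {F : Type*} [NormedAddCommGroup F]
    [NormedSpace ℝ F] [MeasurableSpace F] [BorelSpace F] (L : E →L[ℝ] F) {ι : Type*} [Fintype ι]
    {p : ι → ℝ≥0∞} {r : ℝ} {a : ι → E} (hν : ν = ∑ i, p i • ν.map (scaleAdd r (a i))) :
    ν.map L = ∑ i, p i • (ν.map L).map (scaleAdd r (L (a i))) := by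
  conv_lhs => rw [hν]
  ext s hs
  simp only [Measure.finsetSum_apply, Measure.smul_apply, smul_eq_mul,
    Measure.map_apply L.continuous.measurable hs,
    Measure.map_apply (continuous_scaleAdd _ _).measurable hs,
    Measure.map_apply (continuous_scaleAdd _ _).measurable (hs.preimage L.continuous.measurable),
    Measure.map_apply L.continuous.measurable (hs.preimage (continuous_scaleAdd _ _).measurable),
    ← preimage_comp, L.comp_scaleAdd]

theorem map_compl_closedBall_eq_zero [OpensMeasurableSpace E] {F : Type*} [NormedAddCommGroup F]
    [NormedSpace ℝ F] [MeasurableSpace F] [BorelSpace F] (L : E →L[ℝ] F) {x : E} {R : ℝ}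
    (h : ν (closedBall x R)ᶜ = 0) : ν.map L (closedBall (L x) (‖L‖ * R))ᶜ = 0 := by
  rw [Measure.map_apply L.continuous.measurable measurableSet_closedBall.compl]
  refine measure_mono_null ?_ h
  intro y hy hyR
  refine hy ?_
  rw [mem_closedBall, dist_eq_norm, ← map_sub]
  exact (L.le_opNorm _).trans (by gcongr; exact mem_closedBall_iff_norm.1 hyR)

theorem map_measure_closedBall_le_pow_of_separated [BorelSpace E] [IsProbabilityMeasure ν]
    {F : Type*} [NormedAddCommGroup F] [NormedSpace ℝ F] [MeasurableSpace F] [BorelSpace F]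
    {ι : Type u} [Fintype ι] {p : ι → ℝ≥0∞} (hp : ∑ i, p i = 1) {pmin : ℝ≥0∞}
    (hpmin : ∀ i, pmin ≤ p i) {r : ℝ} (hr0 : 0 < r) (hr1 : r ≤ 1) {a : ι → E}
    (hν : ν = ∑ i, p i • ν.map (scaleAdd r (a i))) {y₀ : E} {R : ℝ}
    (hK : ν (closedBall y₀ R)ᶜ = 0) {n : ℕ} {r₀ : ℝ} (hr₀ : 0 ≤ r₀) (L : E →L[ℝ] F) {i j : ι}
    (hij : r ^ (n + 1) * (2 * (r₀ + ‖L‖ * R)) < ‖L (a i) - L (a j)‖) (k : ℕ) (y : F) :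
    ν.map L (closedBall y (r₀ * (r ^ (n + 1)) ^ k)) ≤ (1 - pmin) ^ k := by
  have := Measure.isProbabilityMeasure_map (μ := ν) L.continuous.aemeasurable
  exact measure_closedBall_le_pow_of_separated hp hpmin hr0 hr1 (map_eq_sum_smul_map_scaleAdd L hν)
    (map_compl_closedBall_eq_zero L hK) hr₀ hij k y

end SelfSimilar

theorem msupport_eq_support {X : Type*} [TopologicalSpace X] [MeasurableSpace X] (μ : Measure X) :
    msupport μ = μ.support :=
  ext fun x => (Measure.mem_support_iff_forall x).symm

theorem measure_compl_closedBall_diam_support {X : Type*} [PseudoMetricSpace X] [MeasurableSpace X]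
    [HereditarilyLindelofSpace X] (μ : Measure X) (hμ : Bornology.IsBounded μ.support) {x : X}
    (hx : x ∈ μ.support) : μ (closedBall x (diam μ.support))ᶜ = 0 :=
  measure_mono_null
    (compl_subset_compl.2 fun _ hy => mem_closedBall.2 (dist_le_diam_of_mem hμ hy hx))
    Measure.measure_compl_support

theorem Set.Subsingleton.of_subset_image_of_lipschitzWith {X : Type*} [EMetricSpace X] {K : Set X}
    (hK : ediam K ≠ ∞) {g : X → X} {L : ℝ≥0} (hg : LipschitzWith L g) (hL : L < 1)
    (hKg : K ⊆ g '' K) : K.Subsingleton := by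
  rw [← ediam_eq_zero_iff]
  by_contra h0
  have hlt : (L : ℝ≥0∞) * ediam K < 1 * ediam K :=
    (ENNReal.mul_lt_mul_iff_left h0 hK).2 (by exact_mod_cast hL)
  rw [one_mul] at hlt
  exact ((ediam_mono hKg).trans (hg.ediam_image_le K)).not_gt hlt

section Attractor

variable {E : Type*} [NormedAddCommGroup E] [InnerProductSpace ℝ E]

theorem subsingleton_image_of_forall_map_eq {F : Type*} [NormedAddCommGroup F] [NormedSpace ℝ F]
    {ι : Type*} {Λ : Set E} (hΛ : Bornology.IsBounded Λ) {r : ℝ} (hr : |r| < 1) {t : ι → E}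
    (hattr : Λ ⊆ ⋃ i, scaleAdd r (t i) '' Λ) (L : E →L[ℝ] F) {b : F} (hb : ∀ i, L (t i) = b) :
    (L '' Λ).Subsingleton := by
  refine Set.Subsingleton.of_subset_image_of_lipschitzWith
    (isBounded_iff_ediam_ne_top.1 (L.lipschitz.isBounded_image hΛ)) (lipschitzWith_scaleAdd r b)
    (by rwa [← NNReal.coe_lt_coe, coe_nnnorm, Real.norm_eq_abs]) ?_
  rintro _ ⟨x, hx, rfl⟩
  obtain ⟨i, y, hy, rfl⟩ := mem_iUnion.1 (hattr hx)
  exact ⟨L y, mem_image_of_mem L hy, by simp [hb]⟩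

theorem exists_ne_zero_forall_inner_eq_zero {v : E} (hE : Module.finrank ℝ E = 2)
    (hv : v ≠ 0) :
    ∃ u : E, u ≠ 0 ∧ ∀ w, ⟪v, w⟫ = 0 → ∃ c : ℝ, w = c • u := by
  have : Fact (Module.finrank ℝ E = 1 + 1) := ⟨hE⟩
  have : Module.finrank ℝ (ℝ ∙ v)ᗮ = 1 := Submodule.finrank_orthogonal_span_singleton hv
  obtain ⟨u, hu, hspan⟩ := finrank_eq_one_iff'.1 this
  refine ⟨u, by simpa using hu, fun w hw => ?_⟩
  obtain ⟨c, hc⟩ := hspan ⟨w, Submodule.mem_orthogonal_singleton_iff_inner_right.2 hw⟩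
  exact ⟨c, by simpa using congrArg Subtype.val hc.symm⟩

theorem exists_subset_line_of_subsingleton_image_inner (hE : Module.finrank ℝ E = 2) {S : Set E}
    {v : E} (hv : v ≠ 0) (h : ((fun x => ⟪v, x⟫) '' S).Subsingleton) {x₀ : E} (hx₀ : x₀ ∈ S) :
    ∃ u : E, u ≠ 0 ∧ S ⊆ {y | ∃ c : ℝ, y = x₀ + c • u} := by
  obtain ⟨u, hu, hperp⟩ := exists_ne_zero_forall_inner_eq_zero hE hv
  refine ⟨u, hu, fun x hx => ?_⟩
  obtain ⟨c, hc⟩ := hperp (x - x₀) (by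
    rw [inner_sub_right, h (mem_image_of_mem _ hx) (mem_image_of_mem _ hx₀), sub_self])
  exact ⟨c, by rw [← hc, add_sub_cancel]⟩

theorem exists_pos_forall_norm_eq_one_le_abs_inner_sub [FiniteDimensional ℝ E] {ι : Type*}
    [Fintype ι] [Nonempty ι] {t : ι → E} (h : ∀ v : E, ‖v‖ = 1 → ∃ i j, ⟪v, t i⟫ ≠ ⟪v, t j⟫) :
    ∃ η > 0, ∀ v : E, ‖v‖ = 1 → ∃ i j, η ≤ |⟪v, t i⟫ - ⟪v, t j⟫| := by
  let ψ (v : E) : ℝ := Finset.univ.sup' Finset.univ_nonempty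
    fun ij : ι × ι => |⟪v, t ij.1⟫ - ⟪v, t ij.2⟫|
  have hψ : Continuous ψ := Continuous.finset_sup'_apply _ fun ij _ => by fun_prop
  obtain ⟨η, hη, hle⟩ := (isCompact_sphere (0 : E) 1).exists_forall_le' hψ.continuousOn
    (a := 0) fun v hv => by
      obtain ⟨i, j, hij⟩ := h v (by simpa using hv)
      exact (abs_pos.2 (sub_ne_zero.2 hij)).trans_le
        (Finset.le_sup' (fun ij : ι × ι => |⟪v, t ij.1⟫ - ⟪v, t ij.2⟫|) (Finset.mem_univ (i, j)))
  refine ⟨η, hη, fun v hv => ?_⟩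
  obtain ⟨⟨i, j⟩, -, hij⟩ := Finset.exists_mem_eq_sup' Finset.univ_nonempty
    fun ij : ι × ι => |⟪v, t ij.1⟫ - ⟪v, t ij.2⟫|
  exact ⟨i, j, hij ▸ hle v (by simpa using hv)⟩

theorem exists_pos_forall_le_abs_inner_sub_of_forall_not_subset_line
    (hE : Module.finrank ℝ E = 2) {ι : Type*} [Fintype ι] {Λ : Set E}
    (hΛ : Bornology.IsBounded Λ) {x₀ : E} (hx₀ : x₀ ∈ Λ) {r : ℝ} (hr : |r| < 1) {t : ι → E}
    (hattr : Λ ⊆ ⋃ i, scaleAdd r (t i) '' Λ)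
    (hline : ∀ x u : E, u ≠ 0 → ¬ Λ ⊆ {y | ∃ c : ℝ, y = x + c • u}) :
    ∃ η > 0, ∀ v : E, ‖v‖ = 1 → ∃ i j, η ≤ |⟪v, t i⟫ - ⟪v, t j⟫| := by
  have : FiniteDimensional ℝ E := Module.finite_of_finrank_eq_succ hE
  obtain ⟨i₀, -⟩ := mem_iUnion.1 (hattr hx₀)
  have : Nonempty ι := ⟨i₀⟩
  refine exists_pos_forall_norm_eq_one_le_abs_inner_sub fun v hv => ?_
  by_contra! h
  obtain ⟨u, hu, hΛu⟩ := exists_subset_line_of_subsingleton_image_inner hE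
    (norm_ne_zero_iff.1 (hv ▸ one_ne_zero))
    (subsingleton_image_of_forall_map_eq hΛ hr hattr (innerSL ℝ v) fun i => h i i₀) hx₀
  exact hline x₀ u hu hΛu

end Attractor

theorem dimH_proj_HHSS_measure_pos_general {q : ℕ}
    (lam : ℝ) (hlam0 : 0 < lam) (hlam1 : lam < 1)
    (t : Fin q → EuclideanSpace ℝ (Fin 2))
    (f : Fin q → EuclideanSpace ℝ (Fin 2) → EuclideanSpace ℝ (Fin 2))
    (hf : ∀ i x, f i x = lam • x + t i)
    (p : Fin q → ℝ≥0∞) (hp : ∀ i, 0 < p i) (hpsum : ∑ i, p i = 1)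
    (μ : Measure (EuclideanSpace ℝ (Fin 2))) [IsProbabilityMeasure μ]
    (hμ : μ = ∑ i, p i • μ.map (f i))
    (Λ : Set (EuclideanSpace ℝ (Fin 2)))
    (hΛcomp : IsCompact Λ) (hΛne : Λ.Nonempty)
    (hattr : Λ = ⋃ i, f i '' Λ)
    (hsupp : msupport μ = Λ)
    (hline : ∀ (x v : EuclideanSpace ℝ (Fin 2)), v ≠ 0 →
      ¬ msupport μ ⊆ {y | ∃ c : ℝ, y = x + c • v}) :
    ∃ c : ℝ≥0∞, 0 < c ∧ ∀ v : EuclideanSpace ℝ (Fin 2), ‖v‖ = 1 →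
      c ≤ dimHMeasure (μ.map (fun x => ⟪x, v⟫)) := by
  obtain rfl : f = fun i => scaleAdd lam (t i) := funext fun i => funext (hf i)
  obtain ⟨x₀, hx₀⟩ := hΛne
  obtain ⟨η, hη, hsep⟩ := exists_pos_forall_le_abs_inner_sub_of_forall_not_subset_line
    finrank_euclideanSpace_fin hΛcomp.isBounded hx₀ (by rwa [abs_of_pos hlam0]) hattr.subset
    (hsupp ▸ hline)
  have hμΛ : μ (closedBall x₀ (diam Λ))ᶜ = 0 := by
    rw [← hsupp, msupport_eq_support] at hΛcomp hx₀ ⊢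
    exact measure_compl_closedBall_diam_support μ hΛcomp.isBounded hx₀
  have hθ : 1 - Finset.univ.inf p < 1 := ENNReal.sub_lt_self ENNReal.one_ne_top one_ne_zero
    ((Finset.lt_inf_iff ENNReal.zero_lt_top).2 fun i _ => hp i).ne'
  obtain ⟨n, hn⟩ := ((((tendsto_pow_atTop_nhds_zero_of_lt_one hlam0.le hlam1).comp
    (tendsto_add_atTop_nat 1)).mul_const (2 * (1 + diam Λ))).eventually
    (gt_mem_nhds (by simpa using hη))).exists
  obtain ⟨d, hd, hθd⟩ := exists_pos_le_ofReal_rpow (pow_pos hlam0 (n + 1)) hθ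
  refine ⟨d, by exact_mod_cast hd, fun v hv => ?_⟩
  obtain ⟨i, j, hij⟩ := hsep v hv
  rw [show (fun x => ⟪x, v⟫) = innerSL ℝ v from funext fun x => real_inner_comm v x]
  refine le_dimHMeasure_of_absolutelyContinuous
    (absolutelyContinuous_hausdorffMeasure_of_measure_closedBall_le_pow (pow_pos hlam0 _)
      (pow_lt_one₀ hlam0.le hlam1 n.succ_ne_zero) one_pos hθ hθd fun k y => ?_)
  exact map_measure_closedBall_le_pow_of_separated hpsum
    (fun i => Finset.inf_le (Finset.mem_univ i)) hlam0 hlam1.le hμ hμΛ zero_le_one (innerSL ℝ v) (by simpa [hv] using hn.trans_le hij) k y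

/-- A homogeneous homothetic self-similar measure in `ℝ²` with strong separation whose support
is not contained in any line has all its orthogonal projections of dimension at least `c > 0`. -/
theorem dimH_proj_HHSS_measure_pos {q : ℕ} (hq : 0 < q)
    (lam : ℝ) (hlam0 : 0 < lam) (hlam1 : lam < 1)
    (t : Fin q → EuclideanSpace ℝ (Fin 2))
    (f : Fin q → EuclideanSpace ℝ (Fin 2) → EuclideanSpace ℝ (Fin 2))
    (hf : ∀ i x, f i x = lam • x + t i)
    (p : Fin q → ℝ≥0∞) (hp : ∀ i, 0 < p i) (hpsum : ∑ i, p i = 1)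
    (μ : Measure (EuclideanSpace ℝ (Fin 2))) [IsProbabilityMeasure μ]
    (hμ : μ = ∑ i, p i • μ.map (f i))
    (Λ : Set (EuclideanSpace ℝ (Fin 2)))
    (hΛcomp : IsCompact Λ) (hΛne : Λ.Nonempty)
    (hattr : Λ = ⋃ i, f i '' Λ)
    (hSSC : ∀ i j, i ≠ j → Disjoint (f i '' Λ) (f j '' Λ))
    (hsupp : msupport μ = Λ)
    (hline : ∀ (x v : EuclideanSpace ℝ (Fin 2)), v ≠ 0 →
      ¬ msupport μ ⊆ {y | ∃ c : ℝ, y = x + c • v}) :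
    ∃ c : ℝ≥0∞, 0 < c ∧ ∀ v : EuclideanSpace ℝ (Fin 2), ‖v‖ = 1 →
      c ≤ dimHMeasure (μ.map (fun x => ⟪x, v⟫)) :=
  dimH_proj_HHSS_measure_pos_general lam hlam0 hlam1 t f hf p hp hpsum μ hμ Λ hΛcomp hΛne hattr
    hsupp hline
end

section
/- Let μ be a homogeneous homothetic self-similar measure with strong separation condition in ℝ² whose support is not contained in any line, with probability weights p_1,...,p_q, contraction ratio λ, and let p_min = min_i p_i. Then there exists N ≥ 1 such that for every orthogonal projection π ∈ Π_{2,1} and every x in the support of π_*μ, the lower local dimension of π_*μ at x is at least log(1 - p_min^N)/(N log λ) > 0. -/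
open MeasureTheory Metric Filter Set
open scoped ENNReal NNReal Topology RealInnerProductSpace

/-- Lower local dimension of a measure at a point. -/
noncomputable def lowerLocalDim {X : Type*} [MetricSpace X] [MeasurableSpace X]
    (μ : Measure X) (x : X) : ℝ :=
  liminf (fun r : ℝ => Real.log (μ (ball x r)).toReal / Real.log r) (nhdsWithin 0 (Ioi 0))

/-!
Three non-collinear points of `Λ` show that every projection `x ↦ ⟪x, v⟫` separates two
points of `Λ` by some `κ > 0` independent of `v`. Choose `N` with `λᴺ diam Λ ≤ κ / 4`: every
level-`N` cylinder then projects into an interval of length `≤ κ / 4`, so every interval of that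
length misses the projection of some level-`N` cylinder, which carries weight `≥ p_minᴺ`.
Rescaling through the cylinders, an interval of length `κ / 4 · λ^{kN}` has projected mass
`≤ (1 - p_minᴺ)^{k+1}`, i.e. `ν(B(x, r)) ≲ r ^ s` with `s = log (1 - p_minᴺ) / (N log λ)`.
-/

theorem measure_compl_msupport {X : Type*} [TopologicalSpace X] [SecondCountableTopology X]
    [MeasurableSpace X] (μ : Measure X) : μ (msupport μ)ᶜ = 0 := by
  refine measure_null_of_locally_null _ fun x hx => ?_
  obtain ⟨U, hU, hU0⟩ : ∃ U ∈ 𝓝 x, ¬ 0 < μ U := by simpa [msupport] using hx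
  exact ⟨U, mem_nhdsWithin_of_mem_nhds hU, nonpos_iff_eq_zero.1 (not_lt.1 hU0)⟩

namespace Real

theorem log_mul_rpow_div_log {a r : ℝ} (ha : 0 < a) (hr : 0 < r) (hr1 : r ≠ 1) (e : ℝ) :
    log (a * r ^ e) / log r = e + log a / log r := by
  have : log r ≠ 0 := log_ne_zero_of_pos_of_ne_one hr hr1
  rw [log_mul ha.ne' (rpow_pos_of_pos hr e).ne', log_rpow hr]
  field_simp
  ring

theorem log_div_log_le_of_mul_rpow_le {a e F r : ℝ} (ha : 0 < a) (hr : 0 < r) (hr1 : r < 1)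
    (h : a * r ^ e ≤ F) : log F / log r ≤ e + log a / log r := by
  rw [← log_mul_rpow_div_log ha hr hr1.ne]
  exact div_le_div_of_nonpos_of_le (log_nonpos hr.le hr1.le)
    (log_le_log (by positivity) h)

theorem le_log_div_log_of_le_mul_rpow {a e F r : ℝ} (ha : 0 < a) (hr : 0 < r) (hr1 : r < 1)
    (hF : 0 < F) (h : F ≤ a * r ^ e) : e + log a / log r ≤ log F / log r := by
  rw [← log_mul_rpow_div_log ha hr hr1.ne]
  exact div_le_div_of_nonpos_of_le (log_nonpos hr.le hr1.le) (log_le_log hF h)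

theorem tendsto_add_log_div_log (a e : ℝ) :
    Tendsto (fun r => e + log a / log r) (𝓝[>] 0) (𝓝 e) := by
  simpa using tendsto_const_nhds.add (tendsto_log_nhdsGT_zero.const_div_atBot (log a))

theorem pow_eq_pow_rpow_logb {ρ α : ℝ} (hρ0 : 0 < ρ) (hρ1 : ρ ≠ 1) (hα : 0 < α) (n : ℕ) :
    α ^ n = (ρ ^ n) ^ logb ρ α := by
  rw [← rpow_pow_comm hρ0.le, rpow_logb hρ0 hρ1 hα]

theorem eventually_le_mul_rpow_of_forall_pow {F : ℝ → ℝ} {A ρ α : ℝ} (hA : 0 < A)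
    (hρ0 : 0 < ρ) (hρ1 : ρ < 1) (hα0 : 0 < α) (hα1 : α ≤ 1)
    (hF : ∀ (k : ℕ) (r : ℝ), 0 < r → r ≤ A * ρ ^ k → F r ≤ α ^ (k + 1)) :
    ∀ᶠ r in 𝓝[>] 0, F r ≤ A ^ (-logb ρ α) * r ^ logb ρ α := by
  filter_upwards [Ioo_mem_nhdsGT hA] with r ⟨hr0, hrA⟩
  obtain ⟨k, hk, hk'⟩ := exists_nat_pow_near_of_lt_one (div_pos hr0 hA)
    ((div_le_one hA).2 hrA.le) hρ0 hρ1
  calc F r ≤ α ^ (k + 1) := hF k r hr0 (by rwa [div_le_iff₀' hA] at hk')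
    _ = (ρ ^ (k + 1)) ^ logb ρ α := pow_eq_pow_rpow_logb hρ0 hρ1.ne hα0 _
    _ ≤ (r / A) ^ logb ρ α :=
      rpow_le_rpow (by positivity) hk.le (logb_nonneg_of_base_lt_one hρ0 hρ1 hα0 hα1)
    _ = A ^ (-logb ρ α) * r ^ logb ρ α := by
      rw [div_rpow hr0.le hA.le, rpow_neg hA.le, div_eq_inv_mul]

theorem frequently_mul_rpow_le_of_forall_pow {G : ℝ → ℝ} {A ρ w : ℝ} (hA : 0 < A)
    (hρ0 : 0 < ρ) (hρ1 : ρ < 1) (hw : 0 < w) (hG : ∀ n : ℕ, w ^ n ≤ G (A * ρ ^ n)) :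
    ∃ᶠ r in 𝓝[>] 0, A ^ (-logb ρ w) * r ^ logb ρ w ≤ G r := by
  have hscale : Tendsto (fun n : ℕ => A * ρ ^ n) atTop (𝓝[>] 0) := by
    refine tendsto_nhdsWithin_iff.2 ⟨?_, Eventually.of_forall fun n => mem_Ioi.2 (by positivity)⟩
    simpa using (tendsto_pow_atTop_nhds_zero_of_lt_one hρ0.le hρ1).const_mul A
  refine hscale.frequently (Frequently.of_forall fun n => ?_)
  rw [mul_rpow hA.le (by positivity), ← mul_assoc, ← rpow_add hA, neg_add_cancel, rpow_zero,
    one_mul, ← pow_eq_pow_rpow_logb hρ0 hρ1.ne hw]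
  exact hG n

end Real

open Real in
theorem le_lowerLocalDim_of_rpow_bounds {X : Type*} [MetricSpace X] [MeasurableSpace X]
    {μ : Measure X} [IsFiniteMeasure μ] {x : X} (hx : x ∈ msupport μ) {c C s t : ℝ}
    (hc : 0 < c) (hC : 0 < C)
    (hlow : ∃ᶠ r in 𝓝[>] 0, c * r ^ t ≤ (μ (ball x r)).toReal)
    (hup : ∀ᶠ r in 𝓝[>] 0, (μ (ball x r)).toReal ≤ C * r ^ s) :
    s ≤ lowerLocalDim μ x := by
  have hsmall : ∀ᶠ r in 𝓝[>] (0 : ℝ), r ∈ Ioo 0 1 := Ioo_mem_nhdsGT one_pos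
  -- Without `hlow` the ratio could tend to `+∞`, and `liminf` would take the junk value `0`.
  have hcob : IsCoboundedUnder (· ≥ ·) (𝓝[>] 0)
      (fun r => log (μ (ball x r)).toReal / log r) := by
    refine IsCoboundedUnder.of_frequently_le (a := t + 1) ?_
    refine (hlow.and_eventually (hsmall.and
      ((tendsto_add_log_div_log c t).eventually (gt_mem_nhds (lt_add_one t))))).mono ?_
    rintro r ⟨hr, ⟨hr0, hr1⟩, hlt⟩
    exact (log_div_log_le_of_mul_rpow_le hc hr0 hr1 hr).trans hlt.le
  refine le_of_forall_lt_imp_le_of_dense fun b hb => le_liminf_of_le hcob ?_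
  filter_upwards [hup, hsmall, (tendsto_add_log_div_log C s).eventually (lt_mem_nhds hb)]
    with r hr ⟨hr0, hr1⟩ hbr
  have hpos : 0 < (μ (ball x r)).toReal :=
    ENNReal.toReal_pos (hx _ (ball_mem_nhds x hr0)).ne' (measure_ne_top _ _)
  exact hbr.le.trans (le_log_div_log_of_le_mul_rpow hC hr0 hr1 hpos hr)

theorem nontrivial_of_forall_not_subset_line {E : Type*} [AddCommGroup E] [Module ℝ E]
    [Nontrivial E] {s : Set E} (hs : ∀ x v : E, v ≠ 0 → ¬ s ⊆ {y | ∃ c : ℝ, y = x + c • v}) :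
    s.Nontrivial := by
  obtain ⟨e, he⟩ := exists_ne (0 : E)
  obtain ⟨x₁, hx₁, -⟩ := not_subset.1 (hs 0 e he)
  obtain ⟨x₂, hx₂, hx₂'⟩ := not_subset.1 (hs x₁ e he)
  exact ⟨x₂, hx₂, x₁, hx₁, fun h => hx₂' ⟨0, by simp [h]⟩⟩

section Plane

variable {E : Type*} [NormedAddCommGroup E] [InnerProductSpace ℝ E] [FiniteDimensional ℝ E]

theorem mem_span_singleton_of_inner_eq_zero (hE : Module.finrank ℝ E = 2) {v u w : E}
    (hv : v ≠ 0) (hu : u ≠ 0) (hvu : ⟪v, u⟫ = 0) (hvw : ⟪v, w⟫ = 0) : w ∈ ℝ ∙ u := by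
  have hfr : Module.finrank ℝ (ℝ ∙ v)ᗮ = 1 := by
    have := Submodule.finrank_add_finrank_orthogonal (ℝ ∙ v)
    rw [finrank_span_singleton hv, hE] at this
    omega
  have hspan : (ℝ ∙ u) = (ℝ ∙ v)ᗮ :=
    Submodule.eq_of_le_of_finrank_eq
      ((Submodule.span_singleton_le_iff_mem _ _).2
        (Submodule.mem_orthogonal_singleton_iff_inner_right.2 hvu))
      (by rw [finrank_span_singleton hu, hfr])
  rw [hspan]
  exact Submodule.mem_orthogonal_singleton_iff_inner_right.2 hvw

theorem exists_pos_le_abs_inner_sub_inner (hE : Module.finrank ℝ E = 2) {s : Set E}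
    (hs : ∀ x v : E, v ≠ 0 → ¬ s ⊆ {y | ∃ c : ℝ, y = x + c • v}) :
    ∃ κ > 0, ∀ v : E, ‖v‖ = 1 → ∃ y ∈ s, ∃ z ∈ s, κ ≤ |⟪v, y⟫ - ⟪v, z⟫| := by
  have : Nontrivial E := Module.nontrivial_of_finrank_pos (R := ℝ) (by rw [hE]; norm_num)
  obtain ⟨x₂, hx₂, x₁, hx₁, hne⟩ := nontrivial_of_forall_not_subset_line hs
  have h₂₁ : x₂ - x₁ ≠ 0 := sub_ne_zero.2 hne
  obtain ⟨x₃, hx₃, hx₃'⟩ := not_subset.1 (hs x₁ (x₂ - x₁) h₂₁)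
  let F : E → ℝ := fun v => max |⟪v, x₂ - x₁⟫| |⟪v, x₃ - x₁⟫|
  have hF : ∀ v, v ≠ 0 → 0 < F v := by
    intro v hv
    by_contra! h
    have h₂ : ⟪v, x₂ - x₁⟫ = 0 := abs_nonpos_iff.1 ((le_max_left _ _).trans h)
    have h₃ : ⟪v, x₃ - x₁⟫ = 0 := abs_nonpos_iff.1 ((le_max_right _ _).trans h)
    obtain ⟨c, hc⟩ :=
      Submodule.mem_span_singleton.1 (mem_span_singleton_of_inner_eq_zero hE hv h₂₁ h₂ h₃)
    exact hx₃' ⟨c, by rw [hc]; abel⟩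
  obtain ⟨v₀, hv₀, hmin⟩ := (isCompact_sphere (0 : E) 1).exists_isMinOn
    (NormedSpace.sphere_nonempty.2 zero_le_one) (by fun_prop : Continuous F).continuousOn
  refine ⟨F v₀, hF v₀ fun h => by simp [h] at hv₀, fun v hv => ?_⟩
  have hle : F v₀ ≤ F v := hmin (mem_sphere_zero_iff_norm.2 hv)
  rcases le_max_iff.1 hle with h | h
  · exact ⟨x₂, hx₂, x₁, hx₁, by rwa [← inner_sub_right]⟩
  · exact ⟨x₃, hx₃, x₁, hx₁, by rwa [← inner_sub_right]⟩

end Plane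

section Homothetic

variable {E : Type*} [NormedAddCommGroup E] [NormedSpace ℝ E]

def homothetic (ρ : ℝ) (t : E) (x : E) : E := ρ • x + t

@[simp] theorem homothetic_apply (ρ : ℝ) (t x : E) : homothetic ρ t x = ρ • x + t := rfl

@[simp] theorem homothetic_one_zero : homothetic (1 : ℝ) (0 : E) = id := by
  ext; simp

theorem homothetic_comp_homothetic (ρ σ : ℝ) (t u : E) :
    homothetic ρ t ∘ homothetic σ u = homothetic (ρ * σ) (ρ • u + t) := by
  ext x
  simp only [Function.comp_apply, homothetic_apply, smul_add, smul_smul]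
  abel

@[fun_prop] theorem continuous_homothetic (ρ : ℝ) (t : E) : Continuous (homothetic ρ t) := by
  unfold homothetic; fun_prop

theorem homothetic_sub_homothetic (ρ : ℝ) (t x y : E) :
    homothetic ρ t x - homothetic ρ t y = ρ • (x - y) := by
  simp only [homothetic_apply, smul_sub]; abel

theorem ContinuousLinearMap.map_homothetic (ℓ : E →L[ℝ] ℝ) (ρ : ℝ) (t x : E) :
    ℓ (homothetic ρ t x) = ρ * ℓ x + ℓ t := by
  simp

theorem ContinuousLinearMap.abs_map_homothetic_sub_le (ℓ : E →L[ℝ] ℝ) {Λ : Set E}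
    (hΛ : Bornology.IsBounded Λ) {x y : E} (hx : x ∈ Λ) (hy : y ∈ Λ) (ρ : ℝ) (t : E) :
    |ℓ (homothetic ρ t x) - ℓ (homothetic ρ t y)| ≤ |ρ| * ‖ℓ‖ * diam Λ := by
  rw [← map_sub, homothetic_sub_homothetic, map_smul, smul_eq_mul, abs_mul, mul_assoc]
  gcongr
  calc |ℓ (x - y)| ≤ ‖ℓ‖ * ‖x - y‖ := ℓ.le_opNorm _
    _ ≤ ‖ℓ‖ * diam Λ := by
      gcongr
      rw [← dist_eq_norm]
      exact dist_le_diam_of_mem hΛ hx hy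

theorem ContinuousLinearMap.preimage_homothetic_preimage_Icc (ℓ : E →L[ℝ] ℝ) {ρ : ℝ}
    (hρ : 0 < ρ) (t : E) (a b : ℝ) :
    homothetic ρ t ⁻¹' (ℓ ⁻¹' Icc a b) = ℓ ⁻¹' Icc ((a - ℓ t) / ρ) ((b - ℓ t) / ρ) := by
  ext x
  simp only [mem_preimage, mem_Icc, ℓ.map_homothetic, div_le_iff₀ hρ, le_div_iff₀ hρ]
  constructor <;> rintro ⟨h₁, h₂⟩ <;> constructor <;> linarith

theorem subsingleton_of_eq_image_homothetic {Λ : Set E} (hΛ : Bornology.IsBounded Λ) {ρ : ℝ}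
    (hρ : |ρ| < 1) {t : E} (h : Λ = homothetic ρ t '' Λ) : Λ.Subsingleton := by
  have hdiam : diam Λ ≤ |ρ| * diam Λ := by
    refine diam_le_of_forall_dist_le (by positivity) fun x hx y hy => ?_
    rw [h] at hx hy
    obtain ⟨x, hx, rfl⟩ := hx
    obtain ⟨y, hy, rfl⟩ := hy
    rw [dist_eq_norm, homothetic_sub_homothetic, norm_smul, Real.norm_eq_abs, ← dist_eq_norm]
    exact mul_le_mul_of_nonneg_left (dist_le_diam_of_mem hΛ hx hy) (abs_nonneg ρ)
  refine not_nontrivial_iff.1 fun hnt => ?_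
  have := diam_pos hnt hΛ
  nlinarith

end Homothetic

section Splitting

variable {E : Type*} [NormedAddCommGroup E] [NormedSpace ℝ E] [MeasurableSpace E]

/-- One level of cylinders of a homogeneous self-similar measure `μ` with attractor `Λ`: at level
`n` of the IFS `x ↦ λ • x + tᵢ` one has `ρ = λⁿ` and `w = p_minⁿ`. -/
structure HomotheticSplitting (μ : Measure E) (Λ : Set E) (ρ w : ℝ) where
  ι : Type
  [fintype : Fintype ι]
  weight : ι → ℝ
  shift : ι → E
  le_weight : ∀ i, w ≤ weight i
  sum_weight : ∑ i, weight i = 1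
  measure_eq : μ = ∑ i, ENNReal.ofReal (weight i) • μ.map (homothetic ρ (shift i))
  set_eq : Λ = ⋃ i, homothetic ρ (shift i) '' Λ

namespace HomotheticSplitting

attribute [instance] fintype

variable {μ : Measure E} {Λ : Set E} {ρ w : ℝ}

def one (μ : Measure E) (Λ : Set E) : HomotheticSplitting μ Λ 1 1 where
  ι := Unit
  weight _ := 1
  shift _ := 0
  le_weight _ := le_rfl
  sum_weight := by simp
  measure_eq := by simp
  set_eq := by simp [iUnion_const]

theorem exists_homothetic_eq (S : HomotheticSplitting μ Λ ρ w) {y : E} (hy : y ∈ Λ) :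
    ∃ i, ∃ x ∈ Λ, homothetic ρ (S.shift i) x = y := by
  rw [S.set_eq] at hy
  simpa using hy

theorem weight_le_half (S : HomotheticSplitting μ Λ ρ w) (hw : 0 ≤ w) (hρ : |ρ| < 1)
    (hΛ : Bornology.IsBounded Λ) (hnt : Λ.Nontrivial) : w ≤ 1 / 2 := by
  classical
  by_cases h : ∃ i j : S.ι, i ≠ j
  · obtain ⟨i, j, hij⟩ := h
    have : S.weight i + S.weight j ≤ 1 := by
      rw [← S.sum_weight, ← Finset.sum_pair hij]
      exact Finset.sum_le_sum_of_subset_of_nonneg (Finset.subset_univ _)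
        fun k _ _ => hw.trans (S.le_weight k)
    linarith [S.le_weight i, S.le_weight j]
  · push Not at h
    obtain ⟨i⟩ : Nonempty S.ι := by
      by_contra! hι
      simpa using S.sum_weight
    have : Nonempty S.ι := ⟨i⟩
    have hΛi : Λ = homothetic ρ (S.shift i) '' Λ :=
      S.set_eq.trans ((iUnion_congr fun j => by rw [h j i]).trans (iUnion_const _))
    exact (hnt.not_subsingleton (subsingleton_of_eq_image_homothetic hΛ hρ hΛi)).elim

theorem exists_forall_notMem_Icc (S : HomotheticSplitting μ Λ ρ w) (hΛ : Bornology.IsBounded Λ)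
    {ℓ : E →L[ℝ] ℝ} {κ : ℝ} (hκ : 0 < κ) (hsep : ∃ y ∈ Λ, ∃ z ∈ Λ, κ ≤ |ℓ y - ℓ z|)
    (hsmall : |ρ| * ‖ℓ‖ * diam Λ ≤ κ / 4) {a b : ℝ} (hab : b - a ≤ κ / 4) :
    ∃ i, ∀ x ∈ Λ, ℓ (homothetic ρ (S.shift i) x) ∉ Icc a b := by
  obtain ⟨y, hy, z, hz, hyz⟩ := hsep
  obtain ⟨i, y', hy', rfl⟩ := S.exists_homothetic_eq hy
  obtain ⟨j, z', hz', rfl⟩ := S.exists_homothetic_eq hz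
  by_contra! hmeet
  obtain ⟨u, hu, hua, hub⟩ := hmeet i
  obtain ⟨u', hu', hua', hub'⟩ := hmeet j
  have h₁ := abs_le.1 (ℓ.abs_map_homothetic_sub_le hΛ hy' hu ρ (S.shift i))
  have h₂ := abs_le.1 (ℓ.abs_map_homothetic_sub_le hΛ hz' hu' ρ (S.shift j))
  rcases le_abs.1 hyz with h | h <;> linarith [h₁.1, h₁.2, h₂.1, h₂.2]

variable [BorelSpace E]

theorem measure_apply (S : HomotheticSplitting μ Λ ρ w) {s : Set E} (hs : MeasurableSet s) :
    μ s = ∑ i, ENNReal.ofReal (S.weight i) * μ (homothetic ρ (S.shift i) ⁻¹' s) := by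
  conv_lhs => rw [S.measure_eq]
  simp only [Measure.finsetSum_apply, Measure.smul_apply, smul_eq_mul,
    Measure.map_apply (continuous_homothetic _ _).measurable hs]

def comp (S : HomotheticSplitting μ Λ ρ w) {σ v : ℝ} (T : HomotheticSplitting μ Λ σ v)
    (hw : 0 ≤ w) (hv : 0 ≤ v) : HomotheticSplitting μ Λ (ρ * σ) (w * v) where
  ι := S.ι × T.ι
  weight a := S.weight a.1 * T.weight a.2
  shift a := ρ • T.shift a.2 + S.shift a.1
  le_weight a := mul_le_mul (S.le_weight _) (T.le_weight _) hv (hw.trans (S.le_weight _))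
  sum_weight := by
    rw [Fintype.sum_prod_type, ← Finset.sum_mul_sum, S.sum_weight, T.sum_weight, one_mul]
  measure_eq := by
    ext s hs
    rw [S.measure_apply hs]
    simp only [Measure.finsetSum_apply, Measure.smul_apply, smul_eq_mul, Fintype.sum_prod_type,
      ← homothetic_comp_homothetic]
    refine Finset.sum_congr rfl fun i _ => ?_
    rw [T.measure_apply ((continuous_homothetic _ _).measurable hs), Finset.mul_sum]
    refine Finset.sum_congr rfl fun j _ => ?_
    rw [Measure.map_apply (by fun_prop) hs, preimage_comp,
      ENNReal.ofReal_mul (hw.trans (S.le_weight i)), mul_assoc]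
  set_eq := by
    refine S.set_eq.trans ?_
    simp only [← homothetic_comp_homothetic, image_comp, iUnion_prod']
    refine iUnion_congr fun i => ?_
    rw [← image_iUnion, ← T.set_eq]

theorem nonempty_pow (S : HomotheticSplitting μ Λ ρ w) (hw : 0 ≤ w) (n : ℕ) :
    Nonempty (HomotheticSplitting μ Λ (ρ ^ n) (w ^ n)) := by
  induction n with
  | zero => simpa using ⟨one μ Λ⟩
  | succ n ih =>
    rw [pow_succ, pow_succ]
    exact ⟨ih.some.comp S (pow_nonneg hw n) hw⟩

theorem measure_le_of_preimage_null (S : HomotheticSplitting μ Λ ρ w) (hw : 0 ≤ w) {s : Set E}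
    (hs : MeasurableSet s) {B : ℝ≥0∞} (hB : ∀ i, μ (homothetic ρ (S.shift i) ⁻¹' s) ≤ B)
    (i₀ : S.ι) (h₀ : μ (homothetic ρ (S.shift i₀) ⁻¹' s) = 0) :
    μ s ≤ ENNReal.ofReal (1 - w) * B := by
  classical
  rw [S.measure_apply hs, ← Finset.sum_erase_add _ _ (Finset.mem_univ i₀), h₀, mul_zero, add_zero]
  calc ∑ i ∈ Finset.univ.erase i₀, ENNReal.ofReal (S.weight i) * μ (homothetic ρ (S.shift i) ⁻¹' s)
      ≤ ∑ i ∈ Finset.univ.erase i₀, ENNReal.ofReal (S.weight i) * B := by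
        gcongr with i; exact hB i
    _ = ENNReal.ofReal (1 - S.weight i₀) * B := by
      rw [← Finset.sum_mul, ← ENNReal.ofReal_sum_of_nonneg fun i _ => hw.trans (S.le_weight i),
        Finset.sum_erase_eq_sub (Finset.mem_univ i₀), S.sum_weight]
    _ ≤ ENNReal.ofReal (1 - w) * B := by
      gcongr; exact S.le_weight i₀

theorem ofReal_weight_mul_le_measure_image (S : HomotheticSplitting μ Λ ρ w) (i : S.ι) :
    ENNReal.ofReal (S.weight i) * μ Λ ≤ μ (homothetic ρ (S.shift i) '' Λ) := by
  have h := congrArg (fun ν : Measure E => ν (homothetic ρ (S.shift i) '' Λ)) S.measure_eq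
  simp only [Measure.finsetSum_apply, Measure.smul_apply, smul_eq_mul] at h
  rw [h]
  calc ENNReal.ofReal (S.weight i) * μ Λ
      ≤ ENNReal.ofReal (S.weight i) *
          μ.map (homothetic ρ (S.shift i)) (homothetic ρ (S.shift i) '' Λ) := by
        exact mul_le_mul_right
          (Measure.le_map_apply_image (continuous_homothetic _ _).aemeasurable Λ) _
    _ ≤ _ := Finset.single_le_sum (f := fun j => ENNReal.ofReal (S.weight j) *
        μ.map (homothetic ρ (S.shift j)) (homothetic ρ (S.shift i) '' Λ))
        (fun _ _ => by positivity) (Finset.mem_univ i)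

theorem measure_preimage_Icc_le (S : HomotheticSplitting μ Λ ρ w) [IsProbabilityMeasure μ]
    (hw : 0 ≤ w) (hρ0 : 0 < ρ) (hρ1 : ρ ≤ 1) (hΛ : Bornology.IsBounded Λ) (hΛμ : μ Λᶜ = 0)
    {ℓ : E →L[ℝ] ℝ} {κ : ℝ} (hκ : 0 < κ) (hsep : ∃ y ∈ Λ, ∃ z ∈ Λ, κ ≤ |ℓ y - ℓ z|)
    (hsmall : ρ * ‖ℓ‖ * diam Λ ≤ κ / 4) (k : ℕ) {a b : ℝ} (hab : b - a ≤ κ / 4 * ρ ^ k) :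
    μ (ℓ ⁻¹' Icc a b) ≤ ENNReal.ofReal (1 - w) ^ (k + 1) := by
  have step : ∀ {a b : ℝ} {B : ℝ≥0∞}, b - a ≤ κ / 4 →
      (∀ i, μ (homothetic ρ (S.shift i) ⁻¹' (ℓ ⁻¹' Icc a b)) ≤ B) →
      μ (ℓ ⁻¹' Icc a b) ≤ ENNReal.ofReal (1 - w) * B := by
    intro a b B hab hB
    obtain ⟨i₀, hi₀⟩ :=
      S.exists_forall_notMem_Icc hΛ hκ hsep (by rwa [abs_of_pos hρ0]) hab
    exact S.measure_le_of_preimage_null hw (measurableSet_Icc.preimage ℓ.continuous.measurable)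
      hB i₀ (measure_mono_null (fun x hx hxΛ => hi₀ x hxΛ hx) hΛμ)
  induction k generalizing a b with
  | zero => simpa using step (by simpa using hab) fun _ => prob_le_one
  | succ k ih =>
    rw [pow_succ']
    refine step (hab.trans ?_) fun i => ?_
    · have : ρ ^ (k + 1) ≤ 1 := pow_le_one₀ hρ0.le hρ1
      nlinarith
    · rw [ℓ.preimage_homothetic_preimage_Icc hρ0]
      refine ih ?_
      rwa [← sub_div, sub_sub_sub_cancel_right, div_le_iff₀ hρ0, mul_assoc, ← pow_succ]

theorem map_ball_le (S : HomotheticSplitting μ Λ ρ w) [IsProbabilityMeasure μ]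
    (hw : 0 ≤ w) (hρ0 : 0 < ρ) (hρ1 : ρ ≤ 1) (hΛ : Bornology.IsBounded Λ) (hΛμ : μ Λᶜ = 0)
    {ℓ : E →L[ℝ] ℝ} {κ : ℝ} (hκ : 0 < κ) (hsep : ∃ y ∈ Λ, ∃ z ∈ Λ, κ ≤ |ℓ y - ℓ z|)
    (hsmall : ρ * ‖ℓ‖ * diam Λ ≤ κ / 4) (k : ℕ) {x r : ℝ} (hr : 2 * r ≤ κ / 4 * ρ ^ k) :
    μ.map ℓ (ball x r) ≤ ENNReal.ofReal (1 - w) ^ (k + 1) := by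
  rw [Measure.map_apply ℓ.continuous.measurable measurableSet_ball, Real.ball_eq_Ioo]
  exact (measure_mono (preimage_mono Ioo_subset_Icc_self)).trans
    (S.measure_preimage_Icc_le hw hρ0 hρ1 hΛ hΛμ hκ hsep hsmall k (by linarith))

theorem ofReal_le_map_ball (S : HomotheticSplitting μ Λ ρ w) [IsProbabilityMeasure μ]
    (hΛ : IsCompact Λ) (hΛμ : μ Λᶜ = 0) {ℓ : E →L[ℝ] ℝ} {x r : ℝ}
    (hx : x ∈ msupport (μ.map ℓ)) (hr : 2 * (|ρ| * ‖ℓ‖ * diam Λ) < r) :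
    ENNReal.ofReal w ≤ μ.map ℓ (ball x r) := by
  have hr0 : 0 < r := lt_of_le_of_lt (by positivity) hr
  obtain ⟨z, hz, hzx⟩ : ∃ z ∈ Λ, ℓ z ∈ ball x (r / 2) := by
    by_contra! h
    refine (hx _ (ball_mem_nhds x (half_pos hr0))).ne' ?_
    rw [Measure.map_apply ℓ.continuous.measurable measurableSet_ball]
    exact measure_mono_null (fun y hy hyΛ => h y hyΛ hy) hΛμ
  obtain ⟨i, z', hz', rfl⟩ := S.exists_homothetic_eq hz
  have hsub : homothetic ρ (S.shift i) '' Λ ⊆ ℓ ⁻¹' ball x r := by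
    rintro _ ⟨y, hy, rfl⟩
    have h := ℓ.abs_map_homothetic_sub_le hΛ.isBounded hy hz' ρ (S.shift i)
    rw [mem_ball, Real.dist_eq] at hzx
    rw [mem_preimage, mem_ball, Real.dist_eq]
    linarith [abs_sub_le (ℓ (homothetic ρ (S.shift i) y)) (ℓ (homothetic ρ (S.shift i) z')) x]
  have hΛ1 : μ Λ = 1 := (prob_compl_eq_zero_iff hΛ.measurableSet).1 hΛμ
  calc ENNReal.ofReal w ≤ ENNReal.ofReal (S.weight i) * μ Λ := by
        rw [hΛ1, mul_one]; exact ENNReal.ofReal_le_ofReal (S.le_weight i)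
    _ ≤ μ (homothetic ρ (S.shift i) '' Λ) := S.ofReal_weight_mul_le_measure_image i
    _ ≤ μ (ℓ ⁻¹' ball x r) := measure_mono hsub
    _ ≤ μ.map ℓ (ball x r) := Measure.le_map_apply ℓ.continuous.aemeasurable _

theorem exists_frequently_le_toReal_map_ball (S : HomotheticSplitting μ Λ ρ w)
    [IsProbabilityMeasure μ] (hw : 0 < w) (hρ0 : 0 < ρ) (hρ1 : ρ < 1) (hΛ : IsCompact Λ)
    (hΛμ : μ Λᶜ = 0) {ℓ : E →L[ℝ] ℝ} {x : ℝ} (hx : x ∈ msupport (μ.map ℓ)) :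
    ∃ c > 0, ∃ᶠ r in 𝓝[>] 0, c * r ^ Real.logb ρ w ≤ (μ.map ℓ (ball x r)).toReal := by
  refine ⟨_, by positivity, Real.frequently_mul_rpow_le_of_forall_pow
    (A := 2 * (‖ℓ‖ * diam Λ) + 1) (by positivity) hρ0 hρ1 hw fun n => ?_⟩
  obtain ⟨Sn⟩ := S.nonempty_pow hw.le n
  refine (ENNReal.ofReal_le_iff_le_toReal (measure_ne_top _ _)).1
    (Sn.ofReal_le_map_ball hΛ hΛμ hx ?_)
  have hρn := pow_pos hρ0 n
  rw [abs_of_pos hρn]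
  linarith [show 2 * (ρ ^ n * ‖ℓ‖ * diam Λ) = (2 * (‖ℓ‖ * diam Λ) + 1) * ρ ^ n - ρ ^ n by ring]

theorem exists_eventually_toReal_map_ball_le (S : HomotheticSplitting μ Λ ρ w)
    [IsProbabilityMeasure μ] (hw0 : 0 ≤ w) (hw1 : w < 1) (hρ0 : 0 < ρ) (hρ1 : ρ < 1)
    (hΛ : Bornology.IsBounded Λ) (hΛμ : μ Λᶜ = 0) {ℓ : E →L[ℝ] ℝ} {κ : ℝ} (hκ : 0 < κ)
    (hsep : ∃ y ∈ Λ, ∃ z ∈ Λ, κ ≤ |ℓ y - ℓ z|) (hsmall : ρ * ‖ℓ‖ * diam Λ ≤ κ / 4) (x : ℝ) :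
    ∃ C > 0, ∀ᶠ r in 𝓝[>] 0, (μ.map ℓ (ball x r)).toReal ≤ C * r ^ Real.logb ρ (1 - w) :=
  ⟨_, by positivity, Real.eventually_le_mul_rpow_of_forall_pow (A := κ / 8) (by positivity)
    hρ0 hρ1 (by linarith) (by linarith) fun k r _ hr =>
      ENNReal.toReal_le_of_le_ofReal (pow_nonneg (by linarith) _)
        ((S.map_ball_le hw0 hρ0 hρ1.le hΛ hΛμ hκ hsep hsmall k (by linarith)).trans_eq
          (ENNReal.ofReal_pow (by linarith) _).symm)⟩

theorem logb_le_lowerLocalDim (S : HomotheticSplitting μ Λ ρ w) [IsProbabilityMeasure μ]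
    (hw0 : 0 < w) (hw1 : w < 1) (hρ0 : 0 < ρ) (hρ1 : ρ < 1) (hΛ : IsCompact Λ)
    (hΛμ : μ Λᶜ = 0) {ℓ : E →L[ℝ] ℝ} {κ : ℝ} (hκ : 0 < κ)
    (hsep : ∃ y ∈ Λ, ∃ z ∈ Λ, κ ≤ |ℓ y - ℓ z|) (hsmall : ρ * ‖ℓ‖ * diam Λ ≤ κ / 4) {x : ℝ}
    (hx : x ∈ msupport (μ.map ℓ)) :
    Real.logb ρ (1 - w) ≤ lowerLocalDim (μ.map ℓ) x := by
  obtain ⟨c, hc, hlow⟩ := S.exists_frequently_le_toReal_map_ball hw0 hρ0 hρ1 hΛ hΛμ hx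
  obtain ⟨C, hC, hup⟩ := S.exists_eventually_toReal_map_ball_le hw0.le hw1 hρ0 hρ1
    hΛ.isBounded hΛμ hκ hsep hsmall x
  exact le_lowerLocalDim_of_rpow_bounds hx hc hC hlow hup

end HomotheticSplitting

end Splitting

theorem lowerLocalDim_proj_HHSS_measure_general {q : ℕ}
    (lam : ℝ) (hlam0 : 0 < lam) (hlam1 : lam < 1)
    (t : Fin q → EuclideanSpace ℝ (Fin 2))
    (f : Fin q → EuclideanSpace ℝ (Fin 2) → EuclideanSpace ℝ (Fin 2))
    (hf : ∀ i x, f i x = lam • x + t i)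
    (p : Fin q → ℝ) (hp : ∀ i, 0 < p i) (hpsum : ∑ i, p i = 1)
    (pmin : ℝ) (hpmin : ∀ i, pmin ≤ p i) (hpmin' : ∃ i, p i = pmin)
    (μ : Measure (EuclideanSpace ℝ (Fin 2))) [IsProbabilityMeasure μ]
    (hμ : μ = ∑ i, ENNReal.ofReal (p i) • μ.map (f i))
    (Λ : Set (EuclideanSpace ℝ (Fin 2)))
    (hΛcomp : IsCompact Λ)
    (hattr : Λ = ⋃ i, f i '' Λ)
    (hsupp : msupport μ = Λ)
    (hline : ∀ (x v : EuclideanSpace ℝ (Fin 2)), v ≠ 0 →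
      ¬ msupport μ ⊆ {y | ∃ c : ℝ, y = x + c • v}) :
    ∃ N : ℕ, 1 ≤ N ∧ 0 < Real.log (1 - pmin ^ N) / (N * Real.log lam) ∧
      ∀ v : EuclideanSpace ℝ (Fin 2), ‖v‖ = 1 →
        ∀ x ∈ msupport (μ.map (fun y => ⟪y, v⟫)),
          Real.log (1 - pmin ^ N) / (N * Real.log lam)
            ≤ lowerLocalDim (μ.map (fun y => ⟪y, v⟫)) x := by
  obtain ⟨i₀, hi₀⟩ := hpmin'
  have hpmin0 : 0 < pmin := hi₀ ▸ hp i₀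
  obtain rfl : f = fun i => homothetic lam (t i) := funext₂ hf
  let S : HomotheticSplitting μ Λ lam pmin := ⟨Fin q, p, t, hpmin, hpsum, hμ, hattr⟩
  obtain ⟨κ, hκ, hsep⟩ := exists_pos_le_abs_inner_sub_inner finrank_euclideanSpace_fin
    (hsupp ▸ hline)
  have hpmin1 : pmin < 1 := (S.weight_le_half hpmin0.le (by rwa [abs_of_pos hlam0])
    hΛcomp.isBounded (nontrivial_of_forall_not_subset_line (hsupp ▸ hline))).trans_lt
    (by norm_num)
  obtain ⟨N, hN1, hN⟩ : ∃ N : ℕ, 1 ≤ N ∧ lam ^ N * diam Λ < κ / 4 :=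
    ((eventually_ge_atTop 1).and (((tendsto_pow_atTop_nhds_zero_of_lt_one hlam0.le
      hlam1).mul_const (diam Λ)).eventually (gt_mem_nhds (by simpa using hκ)))).exists
  obtain ⟨SN⟩ := S.nonempty_pow hpmin0.le N
  have hlamN : lam ^ N < 1 := pow_lt_one₀ hlam0.le hlam1 (by omega)
  have hpminN : pmin ^ N < 1 := pow_lt_one₀ hpmin0.le hpmin1 (by omega)
  have hexp : Real.log (1 - pmin ^ N) / (N * Real.log lam) =
      Real.logb (lam ^ N) (1 - pmin ^ N) := by
    rw [Real.logb, Real.log_pow]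
  refine ⟨N, hN1, hexp ▸ Real.logb_pos_of_base_lt_one (pow_pos hlam0 N) hlamN
    (by linarith) (by linarith [pow_pos hpmin0 N]), fun v hv x hx => ?_⟩
  have hℓ : (fun y => ⟪y, v⟫) = innerSL ℝ v := funext fun y => real_inner_comm _ _
  rw [hℓ] at hx ⊢
  rw [hexp]
  exact SN.logb_le_lowerLocalDim (pow_pos hpmin0 N) hpminN (pow_pos hlam0 N) hlamN hΛcomp
    (hsupp ▸ measure_compl_msupport μ) hκ (hsep v hv)
    (by rw [innerSL_apply_norm, hv, mul_one]; exact hN.le) hx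

/-- A uniform lower bound `log(1 - p_min^N)/(N log λ)` for the lower local dimension of every
orthogonal projection of a homogeneous homothetic self-similar measure in `ℝ²` with strong
separation whose support is not contained in any line. -/
theorem lowerLocalDim_proj_HHSS_measure {q : ℕ} (hq : 0 < q)
    (lam : ℝ) (hlam0 : 0 < lam) (hlam1 : lam < 1)
    (t : Fin q → EuclideanSpace ℝ (Fin 2))
    (f : Fin q → EuclideanSpace ℝ (Fin 2) → EuclideanSpace ℝ (Fin 2))
    (hf : ∀ i x, f i x = lam • x + t i)
    (p : Fin q → ℝ) (hp : ∀ i, 0 < p i) (hpsum : ∑ i, p i = 1)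
    (pmin : ℝ) (hpmin : ∀ i, pmin ≤ p i) (hpmin' : ∃ i, p i = pmin)
    (μ : Measure (EuclideanSpace ℝ (Fin 2))) [IsProbabilityMeasure μ]
    (hμ : μ = ∑ i, ENNReal.ofReal (p i) • μ.map (f i))
    (Λ : Set (EuclideanSpace ℝ (Fin 2)))
    (hΛcomp : IsCompact Λ) (hΛne : Λ.Nonempty)
    (hattr : Λ = ⋃ i, f i '' Λ)
    (hSSC : ∀ i j, i ≠ j → Disjoint (f i '' Λ) (f j '' Λ))
    (hsupp : msupport μ = Λ)
    (hline : ∀ (x v : EuclideanSpace ℝ (Fin 2)), v ≠ 0 →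
      ¬ msupport μ ⊆ {y | ∃ c : ℝ, y = x + c • v}) :
    ∃ N : ℕ, 1 ≤ N ∧ 0 < Real.log (1 - pmin ^ N) / (N * Real.log lam) ∧
      ∀ v : EuclideanSpace ℝ (Fin 2), ‖v‖ = 1 →
        ∀ x ∈ msupport (μ.map (fun y => ⟪y, v⟫)),
          Real.log (1 - pmin ^ N) / (N * Real.log lam)
            ≤ lowerLocalDim (μ.map (fun y => ⟪y, v⟫)) x :=
  lowerLocalDim_proj_HHSS_measure_general lam hlam0 hlam1 t f hf p hp hpsum pmin hpmin hpmin' μ hμ Λ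
    hΛcomp hattr hsupp hline
end

section
/- Let Λ be a homogeneous homothetic self-similar set in ℝ³ (common contraction ratio, no rotations) not contained in any plane. Then for every unit vector v ∈ ℝ³ and every x ∈ Λ there exists an angle α with 0 < α < π/2 such that for every r > 0, the interior of B_r(x) ∩ C_{α,v}(x) intersects Λ, where C_{α,v}(x) = {y ∈ ℝ³ : |⟨x − y, v⟩| ≥ cos(α)‖x − y‖} is the closed double cone with vertex x, axis v and angle α. -/
open Set Metric
open scoped ENNReal NNReal RealInnerProductSpace

/-- The closed double cone with vertex `x`, axis `v` and angle `α`. -/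
def doubleCone (α : ℝ) (v x : EuclideanSpace ℝ (Fin 3)) : Set (EuclideanSpace ℝ (Fin 3)) :=
  {y | Real.cos α * ‖x - y‖ ≤ |⟪x - y, v⟫|}

/-!
Since `Λ` is not contained in the plane through `x` orthogonal to `v`, some `b ∈ Λ` has
`⟪b - x, v⟫ ≠ 0`; then from every `z ∈ Λ` one of `x`, `b` is seen at height at least
`|⟪b - x, v⟫| / 2` along `v`, hence, `Λ` being bounded, inside a fixed open cone of angle
`α < π / 2` about `v`. The homotheties `y ↦ λⁿ y + c` built from the IFS map `Λ` into itself and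
carry some `z ∈ Λ` to `x`; they preserve directions, so the partner of `z` is carried to a point of
`Λ` seen from `x` inside the same cone, at distance at most `λⁿ diam Λ`.
-/

lemma exists_pow_smul_add_mapsTo_of_eq_iUnion {R E ι : Type*} [CommRing R] [AddCommGroup E]
    [Module R E] {lam : R} {t : ι → E} {Λ : Set E}
    (hattr : Λ = ⋃ i, (fun x => lam • x + t i) '' Λ) {x : E} (hx : x ∈ Λ) (n : ℕ) :
    ∃ c : E, ∃ z ∈ Λ, x = lam ^ n • z + c ∧ MapsTo (fun y => lam ^ n • y + c) Λ Λ := by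
  induction n with
  | zero => exact ⟨0, x, hx, by simp, fun y hy => by simpa using hy⟩
  | succ n ih =>
    obtain ⟨c, z, hz, rfl, hmaps⟩ := ih
    rw [hattr] at hz
    obtain ⟨i, z', hz', rfl⟩ := mem_iUnion.1 hz
    refine ⟨lam ^ n • t i + c, z', hz', by rw [pow_succ]; module, fun y hy => ?_⟩
    have hiy : lam • y + t i ∈ Λ := by
      rw [hattr]; exact mem_iUnion.2 ⟨i, mem_image_of_mem _ hy⟩
    convert hmaps hiy using 1
    rw [pow_succ]; module

section InnerProductSpace

variable {E : Type*} [NormedAddCommGroup E] [InnerProductSpace ℝ E]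

lemma exists_forall_exists_mul_norm_lt_abs_inner {s : Set E} (hs : Bornology.IsBounded s)
    {a b v : E} (ha : a ∈ s) (hb : b ∈ s) (hab : ⟪b - a, v⟫ ≠ 0) :
    ∃ κ : ℝ, 0 < κ ∧ κ < 1 ∧ ∀ z ∈ s, ∃ y ∈ s, κ * ‖z - y‖ < |⟪z - y, v⟫| := by
  set c := |⟪b - a, v⟫| / 2 with hc_def
  set D := diam s
  have hc : 0 < c := by positivity
  have hD : 0 ≤ D := diam_nonneg
  have hfar : ∀ z, c ≤ |⟪z - a, v⟫| ∨ c ≤ |⟪z - b, v⟫| := by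
    intro z
    have hsplit : ⟪b - a, v⟫ = ⟪z - a, v⟫ - ⟪z - b, v⟫ := by
      rw [← inner_sub_left]; congr 1; abel
    have htri := abs_sub (⟪z - a, v⟫) (⟪z - b, v⟫)
    rw [← hsplit] at htri
    by_contra! h
    linarith [h.1, h.2]
  -- With `κ = c / (D + 2c)`, both `κ < 1` and `κ D < c` need only `D ≥ 0`.
  refine ⟨c / (D + 2 * c), by positivity, (div_lt_one (by positivity)).2 (by linarith),
    fun z hz => ?_⟩
  have hκD : c / (D + 2 * c) * D < c := by
    rw [div_mul_eq_mul_div, div_lt_iff₀ (by positivity)]; nlinarith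
  have hclose : ∀ y ∈ s, c / (D + 2 * c) * ‖z - y‖ ≤ c / (D + 2 * c) * D := fun y hy =>
    mul_le_mul_of_nonneg_left (dist_eq_norm z y ▸ dist_le_diam_of_mem hs hz hy) (by positivity)
  rcases hfar z with h | h
  · exact ⟨a, ha, by linarith [hclose a ha]⟩
  · exact ⟨b, hb, by linarith [hclose b hb]⟩

lemma exists_mem_dist_lt_sub_mem_of_eq_iUnion {ι : Type*} {lam : ℝ} (hlam0 : 0 < lam)
    (hlam1 : lam < 1) {t : ι → E} {Λ : Set E} (hattr : Λ = ⋃ i, (fun x => lam • x + t i) '' Λ)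
    (hΛ : Bornology.IsBounded Λ) {K : Set E} (hK : ∀ a : ℝ, 0 < a → ∀ w ∈ K, a • w ∈ K)
    (hsees : ∀ z ∈ Λ, ∃ y ∈ Λ, z - y ∈ K) {x : E} (hx : x ∈ Λ) {r : ℝ} (hr : 0 < r) :
    ∃ p ∈ Λ, dist p x < r ∧ x - p ∈ K := by
  have hsmall : ∀ᶠ n : ℕ in Filter.atTop, lam ^ n * diam Λ < r := by
    have := (tendsto_pow_atTop_nhds_zero_of_lt_one hlam0.le hlam1).mul_const (diam Λ)
    rw [zero_mul] at this
    exact this.eventually (gt_mem_nhds hr)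
  obtain ⟨n, hn⟩ := hsmall.exists
  obtain ⟨c, z, hz, rfl, hmaps⟩ := exists_pow_smul_add_mapsTo_of_eq_iUnion hattr hx n
  obtain ⟨y, hy, hzy⟩ := hsees z hz
  have hsub : lam ^ n • z + c - (lam ^ n • y + c) = lam ^ n • (z - y) := by module
  refine ⟨lam ^ n • y + c, hmaps hy, ?_, hsub ▸ hK _ (pow_pos hlam0 n) _ hzy⟩
  calc dist (lam ^ n • y + c) (lam ^ n • z + c) = lam ^ n * dist y z := by
        rw [dist_add_right, dist_smul₀, Real.norm_of_nonneg (pow_pos hlam0 n).le]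
    _ ≤ lam ^ n * diam Λ := by gcongr; exact dist_le_diam_of_mem hΛ hy hz
    _ < r := hn

lemma mul_norm_smul_lt_abs_inner_smul {κ a : ℝ} (ha : 0 < a) {v w : E}
    (hw : κ * ‖w‖ < |⟪w, v⟫|) : κ * ‖a • w‖ < |⟪a • w, v⟫| := by
  rw [norm_smul, real_inner_smul_left, abs_mul, Real.norm_of_nonneg ha.le, abs_of_pos ha]
  nlinarith

end InnerProductSpace

lemma setOf_cos_mul_norm_lt_subset_interior_doubleCone (α : ℝ) (v x : EuclideanSpace ℝ (Fin 3)) :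
    {y | Real.cos α * ‖x - y‖ < |⟪x - y, v⟫|} ⊆ interior (doubleCone α v x) :=
  interior_maximal (fun y (hy : Real.cos α * ‖x - y‖ < |⟪x - y, v⟫|) => hy.le)
    (isOpen_lt (by fun_prop) (by fun_prop))

theorem HHSS_cone_density_general {q : ℕ}
    (lam : ℝ) (hlam0 : 0 < lam) (hlam1 : lam < 1)
    (t : Fin q → EuclideanSpace ℝ (Fin 3))
    (Λ : Set (EuclideanSpace ℝ (Fin 3)))
    (hΛcomp : IsCompact Λ)
    (hattr : Λ = ⋃ i, (fun x => lam • x + t i) '' Λ)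
    (hplane : ∀ (x v : EuclideanSpace ℝ (Fin 3)), v ≠ 0 →
      ¬ Λ ⊆ {y | ⟪y - x, v⟫ = 0}) :
    ∀ v : EuclideanSpace ℝ (Fin 3), ‖v‖ = 1 → ∀ x ∈ Λ,
      ∃ α : ℝ, 0 < α ∧ α < Real.pi / 2 ∧
        ∀ r : ℝ, 0 < r → (interior (ball x r ∩ doubleCone α v x) ∩ Λ).Nonempty := by
  intro v hv x hx
  obtain ⟨b, hb, hxb⟩ := not_subset.1 (hplane x v (norm_ne_zero_iff.1 (hv ▸ one_ne_zero)))
  obtain ⟨κ, hκ0, hκ1, hsees⟩ :=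
    exists_forall_exists_mul_norm_lt_abs_inner hΛcomp.isBounded hx hb hxb
  refine ⟨Real.arccos κ, Real.arccos_pos.2 hκ1, Real.arccos_lt_pi_div_two.2 hκ0, fun r hr => ?_⟩
  obtain ⟨p, hp, hpx, hcone⟩ := exists_mem_dist_lt_sub_mem_of_eq_iUnion hlam0 hlam1 hattr
    hΛcomp.isBounded (K := {w | κ * ‖w‖ < |⟪w, v⟫|})
    (fun _ ha _ hw => mul_norm_smul_lt_abs_inner_smul ha hw) hsees hx hr
  have hcos : Real.cos (Real.arccos κ) = κ := Real.cos_arccos (by linarith) hκ1.le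
  refine ⟨p, ?_, hp⟩
  rw [interior_inter, isOpen_ball.interior_eq]
  exact ⟨hpx, setOf_cos_mul_norm_lt_subset_interior_doubleCone _ v x (by rwa [mem_ofPred_eq, hcos])⟩

/-- A homogeneous homothetic self-similar set in `ℝ³` not contained in any plane intersects the
interior of every small cone at each of its points. -/
theorem HHSS_cone_density {q : ℕ} (hq : 0 < q)
    (lam : ℝ) (hlam0 : 0 < lam) (hlam1 : lam < 1)
    (t : Fin q → EuclideanSpace ℝ (Fin 3))
    (Λ : Set (EuclideanSpace ℝ (Fin 3)))
    (hΛcomp : IsCompact Λ) (hΛne : Λ.Nonempty)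
    (hattr : Λ = ⋃ i, (fun x => lam • x + t i) '' Λ)
    (hplane : ∀ (x v : EuclideanSpace ℝ (Fin 3)), v ≠ 0 →
      ¬ Λ ⊆ {y | ⟪y - x, v⟫ = 0}) :
    ∀ v : EuclideanSpace ℝ (Fin 3), ‖v‖ = 1 → ∀ x ∈ Λ,
      ∃ α : ℝ, 0 < α ∧ α < Real.pi / 2 ∧
        ∀ r : ℝ, 0 < r → (interior (ball x r ∩ doubleCone α v x) ∩ Λ).Nonempty :=
  HHSS_cone_density_general lam hlam0 hlam1 t Λ hΛcomp hattr hplane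
end
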